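/- arXiv:2208.11289 — 2 statements merged into one kernel-verified Lean document; each statement's English description precedes it below -/
import Mathlib

section
/- Let (C_i, ∂_i) for i ∈ ℤ be chain complexes over a field, let f_i : C_i → C_{i+1} be anti-chain maps (f_i ∂_i + ∂_{i+1} f_i = 0), and let h_i : C_i → C_{i+2} satisfy f_{i+1} f_i + h_i ∂_i + ∂_{i+2} h_i = 0. Suppose that for every i the map h_{i+1} f_i + f_{i+2} h_i : C_i → C_{i+3} is a quasi-isomorphism. Then for every i the map C_i → Cone(f_{i+1}) given by x ↦ (f_i(x), h_i(x)) is a quasi-isomorphism. -/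
/-- A map `φ` between modules equipped with differentials `dM`, `dN` is a
quasi-isomorphism if the induced map on homology (kernel of the differential
modulo its image) is injective and surjective. -/
def IsQuasiIso {M N : Type*} [AddCommGroup M] [AddCommGroup N]
    (dM : M → M) (dN : N → N) (φ : M → N) : Prop :=
  (∀ x : M, dM x = 0 → (∃ z : N, φ x = dN z) → ∃ w : M, x = dM w) ∧
    (∀ y : N, dN y = 0 → ∃ x : M, dM x = 0 ∧ ∃ z : N, φ x - y = dN z)

/-- The exact triangle detection lemma: given complexes `C i` over the field 𝔽₂,
anti-chain maps `f i : C i → C (i+1)`, null-homotopies `h i` of `f (i+1) ∘ f i`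
such that `h (i+1) ∘ f i + f (i+2) ∘ h i` is a quasi-isomorphism for all `i`, the
map `x ↦ (f i x, h i x)` from `C i` to the mapping cone of `f (i+1)` is a
quasi-isomorphism. -/
theorem stmt_6 (C : ℤ → Type) [∀ i, AddCommGroup (C i)] [∀ i, Module (ZMod 2) (C i)]
    (d : ∀ i, C i →ₗ[ZMod 2] C i)
    (hd : ∀ i (x : C i), d i (d i x) = 0)
    (f : ∀ i, C i →ₗ[ZMod 2] C (i + 1))
    (hf : ∀ i (x : C i), f i (d i x) + d (i + 1) (f i x) = 0)
    (h : ∀ i, C i →ₗ[ZMod 2] C (i + 1 + 1))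
    (hh : ∀ i (x : C i), f (i + 1) (f i x) + h i (d i x) + d (i + 1 + 1) (h i x) = 0)
    (hqi : ∀ i, IsQuasiIso (fun x => d i x) (fun y => d (i + 1 + 1 + 1) y)
        (fun x => h (i + 1) (f i x) + f (i + 1 + 1) (h i x))) :
    ∀ i, IsQuasiIso (fun x => d i x)
      (fun p : C (i + 1) × C (i + 1 + 1) =>
        (d (i + 1) p.1, f (i + 1) p.1 + d (i + 1 + 1) p.2))
      (fun x => (f i x, h i x)) := by
  intro i
  obtain ⟨j, rfl⟩ : ∃ j, i = j + 1 := ⟨i - 1, by omega⟩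
  have ns : ∀ (k : ℤ) (z : C k), (2 : ℤ) • z = 0 := by
    intro k z
    rw [two_zsmul, ← two_smul (ZMod 2) z, show (2 : ZMod 2) = 0 from rfl, zero_smul]
  have add_self : ∀ (k : ℤ) (z : C k), z + z = 0 := by
    intro k z
    rw [← two_smul (ZMod 2) z, show (2 : ZMod 2) = 0 from rfl, zero_smul]
  have neg_self : ∀ (k : ℤ) (z : C k), -z = z :=
    fun k z => neg_eq_of_add_eq_zero_right (add_self k z)
  have cancel : ∀ (k : ℤ) {a b : C k}, a + b = 0 → b = a := by
    intro k a b hab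
    rw [← neg_eq_of_add_eq_zero_right hab, neg_self]
  have df : ∀ (k : ℤ) (x : C k), d (k + 1) (f k x) = f k (d k x) :=
    fun k x => cancel _ (hf k x)
  have dh : ∀ (k : ℤ) (x : C k), d (k + 1 + 1) (h k x)
      = f (k + 1) (f k x) + h k (d k x) :=
    fun k x => cancel _ (hh k x)
  have hdh : ∀ (k : ℤ) (x : C k), h k (d k x)
      = d (k + 1 + 1) (h k x) + f (k + 1) (f k x) := by
    intro k x
    rw [dh k x]
    abel_nf
    simp [ns]
  have hff : ∀ (k : ℤ) (x : C k), f (k + 1) (f k x)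
      = d (k + 1 + 1) (h k x) + h k (d k x) := by
    intro k x
    rw [dh k x]
    abel_nf
    simp [ns]
  have flip : ∀ (k : ℤ) {a b r : C k}, a - b = r → b = a + r := by
    intro k a b r hr
    rw [sub_eq_iff_eq_add.mp hr]
    abel_nf
    simp [ns]
  unfold IsQuasiIso
  refine ⟨?_, ?_⟩
  · rintro x hx ⟨z, hz⟩
    have hz1 : f (j + 1) x = d (j + 1 + 1) z.1 := congrArg Prod.fst hz
    have hz2 : h (j + 1) x = f (j + 1 + 1) z.1 + d (j + 1 + 1 + 1) z.2 :=
      congrArg Prod.snd hz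
    refine (hqi (j + 1)).1 x hx ⟨h (j + 1 + 1) z.1 + f (j + 1 + 1 + 1) z.2, ?_⟩
    show h (j + 1 + 1) (f (j + 1) x) + f (j + 1 + 1 + 1) (h (j + 1) x)
        = d (j + 1 + 1 + 1 + 1) (h (j + 1 + 1) z.1 + f (j + 1 + 1 + 1) z.2)
    rw [hz1, hz2, map_add, map_add, dh (j + 1 + 1) z.1, df (j + 1 + 1 + 1) z.2]
    abel
  · intro y hy
    have hy1 : d (j + 1 + 1) y.1 = 0 := congrArg Prod.fst hy
    have hy2 : f (j + 1 + 1) y.1 + d (j + 1 + 1 + 1) y.2 = 0 := congrArg Prod.snd hy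
    have hdy2 : d (j + 1 + 1 + 1) y.2 = f (j + 1 + 1) y.1 := cancel _ hy2
    have du : d (j + 1 + 1 + 1 + 1) (h (j + 1 + 1) y.1 + f (j + 1 + 1 + 1) y.2) = 0 := by
      rw [map_add, dh (j + 1 + 1) y.1, df (j + 1 + 1 + 1) y.2, hdy2, hy1, map_zero,
        add_zero]
      exact add_self _ _
    obtain ⟨x, hx, v, hv⟩ := (hqi (j + 1)).2
      (h (j + 1 + 1) y.1 + f (j + 1 + 1 + 1) y.2) du
    have hx' : d (j + 1) x = 0 := hx
    have hu : h (j + 1 + 1) y.1 + f (j + 1 + 1 + 1) y.2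
        = (h (j + 1 + 1) (f (j + 1) x) + f (j + 1 + 1 + 1) (h (j + 1) x))
          + d (j + 1 + 1 + 1 + 1) v := flip _ hv
    obtain ⟨A, hA⟩ : ∃ A, A = f (j + 1) x + y.1 := ⟨_, rfl⟩
    obtain ⟨B, hB⟩ : ∃ B, B = h (j + 1) x + y.2 := ⟨_, rfl⟩
    have hdA : d (j + 1 + 1) A = 0 := by
      rw [hA, map_add, df (j + 1) x, hx', map_zero, hy1, add_zero]
    have hdB : d (j + 1 + 1 + 1) B = f (j + 1 + 1) A := by
      rw [hA, hB, map_add, dh (j + 1) x, hx', map_zero, add_zero, hdy2, map_add]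
    have hAB : h (j + 1 + 1) A + f (j + 1 + 1 + 1) B = d (j + 1 + 1 + 1 + 1) v := by
      rw [hA, hB, map_add, map_add]
      calc h (j + 1 + 1) (f (j + 1) x) + h (j + 1 + 1) y.1
            + (f (j + 1 + 1 + 1) (h (j + 1) x) + f (j + 1 + 1 + 1) y.2)
          = (h (j + 1 + 1) (f (j + 1) x) + f (j + 1 + 1 + 1) (h (j + 1) x))
            + (h (j + 1 + 1) y.1 + f (j + 1 + 1 + 1) y.2) := by abel
        _ = (h (j + 1 + 1) (f (j + 1) x) + f (j + 1 + 1 + 1) (h (j + 1) x))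
            + ((h (j + 1 + 1) (f (j + 1) x) + f (j + 1 + 1 + 1) (h (j + 1) x))
              + d (j + 1 + 1 + 1 + 1) v) := by rw [hu]
        _ = d (j + 1 + 1 + 1 + 1) v := by abel_nf; simp [ns]
    have hhA : h (j + 1 + 1) A = d (j + 1 + 1 + 1 + 1) v + f (j + 1 + 1 + 1) B := by
      calc h (j + 1 + 1) A
          = (h (j + 1 + 1) A + f (j + 1 + 1 + 1) B) + f (j + 1 + 1 + 1) B := by
            abel_nf; simp [ns]
        _ = d (j + 1 + 1 + 1 + 1) v + f (j + 1 + 1 + 1) B := by rw [hAB]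
    have hPhiA : h (j + 1 + 1 + 1) (f (j + 1 + 1) A) + f (j + 1 + 1 + 1 + 1) (h (j + 1 + 1) A)
        = d (j + 1 + 1 + 1 + 1 + 1) (h (j + 1 + 1 + 1) B + f (j + 1 + 1 + 1 + 1) v) := by
      rw [hdB.symm, hhA, hdh (j + 1 + 1 + 1) B, map_add, ← df (j + 1 + 1 + 1 + 1) v,
        map_add]
      abel_nf
      simp [ns]
    obtain ⟨z₁, hz₁⟩ := (hqi (j + 1 + 1)).1 A hdA
      ⟨h (j + 1 + 1 + 1) B + f (j + 1 + 1 + 1 + 1) v, hPhiA⟩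
    have hz₁' : A = d (j + 1 + 1) z₁ := hz₁
    have hdc : d (j + 1 + 1 + 1) (B + f (j + 1 + 1) z₁) = 0 := by
      rw [map_add, hdB, df (j + 1 + 1) z₁, ← hz₁']
      exact add_self _ _
    have hfc : f (j + 1 + 1 + 1) (B + f (j + 1 + 1) z₁)
        = d (j + 1 + 1 + 1 + 1) (v + h (j + 1 + 1) z₁) := by
      rw [map_add, hff (j + 1 + 1) z₁, ← hz₁', map_add]
      calc f (j + 1 + 1 + 1) B
            + (d (j + 1 + 1 + 1 + 1) (h (j + 1 + 1) z₁) + h (j + 1 + 1) A)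
          = (h (j + 1 + 1) A + f (j + 1 + 1 + 1) B)
            + d (j + 1 + 1 + 1 + 1) (h (j + 1 + 1) z₁) := by abel
        _ = d (j + 1 + 1 + 1 + 1) v + d (j + 1 + 1 + 1 + 1) (h (j + 1 + 1) z₁) := by
            rw [hAB]
    obtain ⟨p, hp, q, hq⟩ := (hqi j).2 (B + f (j + 1 + 1) z₁) hdc
    have hp' : d j p = 0 := hp
    have hc : B + f (j + 1 + 1) z₁
        = (h (j + 1) (f j p) + f (j + 1 + 1) (h j p)) + d (j + 1 + 1 + 1) q :=
      flip _ hq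
    have hdr : d (j + 1) (f j p) = 0 := by rw [df j p, hp', map_zero]
    have e1 : d (j + 1 + 1 + 1 + 1) (v + h (j + 1 + 1) z₁)
        = f (j + 1 + 1 + 1) (h (j + 1) (f j p))
          + (d (j + 1 + 1 + 1 + 1) (h (j + 1 + 1) (h j p))
            + h (j + 1 + 1) (f (j + 1) (f j p)))
          + d (j + 1 + 1 + 1 + 1) (f (j + 1 + 1 + 1) q) := by
      rw [← hfc, hc, map_add, map_add, hff (j + 1 + 1) (h j p), dh j p, hp', map_zero,
        add_zero, ← df (j + 1 + 1 + 1) q]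
    have hPhiR : h (j + 1 + 1) (f (j + 1) (f j p)) + f (j + 1 + 1 + 1) (h (j + 1) (f j p))
        = d (j + 1 + 1 + 1 + 1)
          (v + h (j + 1 + 1) z₁ + (h (j + 1 + 1) (h j p) + f (j + 1 + 1 + 1) q)) := by
      rw [map_add, e1, map_add]
      abel_nf
      simp [ns]
    obtain ⟨s, hs⟩ := (hqi (j + 1)).1 (f j p) hdr
      ⟨v + h (j + 1 + 1) z₁ + (h (j + 1 + 1) (h j p) + f (j + 1 + 1 + 1) q), hPhiR⟩
    have hs' : f j p = d (j + 1) s := hs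
    have hdW : d (j + 1 + 1) (f (j + 1) s + h j p) = 0 := by
      rw [map_add, df (j + 1) s, ← hs', dh j p, hp', map_zero, add_zero]
      exact add_self _ _
    have hcw : B + f (j + 1 + 1) z₁
        = f (j + 1 + 1) (f (j + 1) s + h j p) + d (j + 1 + 1 + 1) (h (j + 1) s + q) := by
      rw [hc, hs', hdh (j + 1) s, map_add, map_add]
      abel
    refine ⟨x, hx, ⟨(z₁ + (f (j + 1) s + h j p), h (j + 1) s + q), ?_⟩⟩
    show (f (j + 1) x, h (j + 1) x) - y
        = (d (j + 1 + 1) (z₁ + (f (j + 1) s + h j p)),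
           f (j + 1 + 1) (z₁ + (f (j + 1) s + h j p)) + d (j + 1 + 1 + 1) (h (j + 1) s + q))
    have e₁ : f (j + 1) x - y.1 = d (j + 1 + 1) (z₁ + (f (j + 1) s + h j p)) := by
      rw [sub_eq_add_neg, neg_self, ← hA, map_add, hdW, add_zero]
      exact hz₁'
    have e₂ : h (j + 1) x - y.2
        = f (j + 1 + 1) (z₁ + (f (j + 1) s + h j p)) + d (j + 1 + 1 + 1) (h (j + 1) s + q) := by
      rw [sub_eq_add_neg, neg_self, ← hB, map_add]
      calc B = (B + f (j + 1 + 1) z₁) + f (j + 1 + 1) z₁ := by abel_nf; simp [ns]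
        _ = (f (j + 1 + 1) (f (j + 1) s + h j p) + d (j + 1 + 1 + 1) (h (j + 1) s + q))
            + f (j + 1 + 1) z₁ := by rw [hcw]
        _ = f (j + 1 + 1) z₁ + f (j + 1 + 1) (f (j + 1) s + h j p)
            + d (j + 1 + 1 + 1) (h (j + 1) s + q) := by abel
    have hsub : (f (j + 1) x, h (j + 1) x) - y
        = (f (j + 1) x - y.1, h (j + 1) x - y.2) := rfl
    rw [hsub, e₁, e₂]
end

section
/- Let n ≥ 1, g ≥ 1, s be integers with g odd and −g+1 ≤ s ≤ g, and set f(n,s) = ns − n(n−1)/2. Work with the conventions: a generator of A_s at coordinates (i,j) has ℐ = max(i, j−s) and 𝒥 = max(i−n, j−s) + f(n,s); a generator U^c·β_t of B_t has ℐ = −c and 𝒥 = −c − n + f(n,t). If s is even, let x_s be the A_s-generator at (0, s−1); then (ℐ,𝒥)(x_s) − (ℐ,𝒥)(U^{(g−s+1)/2} β_s) = ((g−s+1)/2, n+(g−s−1)/2) and (ℐ,𝒥)(x_s) − (ℐ,𝒥)(U^{(g+s+1)/2} β_{s+1}) = ((g+s+1)/2, (g+s−1)/2). If s is odd, let x_s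 be the A_s-generator at (0, s); then (ℐ,𝒥)(x_s) − (ℐ,𝒥)(U^{(g−s)/2} β_s) = ((g−s)/2, n+(g−s)/2) and (ℐ,𝒥)(x_s) − (ℐ,𝒥)(U^{(g+s)/2} β_{s+1}) = ((g+s)/2, (g+s)/2). -/
/-- Lemma 8.4 of the paper (case -g+1 ≤ s ≤ g): the double filtration drops
Δ_{ℐ,𝒥}(x_s, β_s) and Δ_{ℐ,𝒥}(x_s, β_{s+1}) of the top generator x_s of A_s in
the filtered mapping cone X_n^∞(T_{2,4k+3}), with g = 2k+1 odd.  Here a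
generator of A_s at coordinates (i,j) has ℐ = max i (j-s) and
𝒥 = max (i-n) (j-s) + f n s with f n s = n*s - n*(n-1)/2, while U^c·β_t has
ℐ = -c and 𝒥 = -c - n + f n t. -/
theorem stmt_10 (n g s : ℤ) (hn : 1 ≤ n) (hg : 1 ≤ g) (hgodd : Odd g)
    (hs1 : -g + 1 ≤ s) (hs2 : s ≤ g) :
    (Even s →
      (max (0 : ℤ) ((s - 1) - s) - (-((g - s + 1) / 2)) = (g - s + 1) / 2 ∧
       (max (0 - n) ((s - 1) - s) + (n * s - n * (n - 1) / 2)) -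
         (-((g - s + 1) / 2) - n + (n * s - n * (n - 1) / 2)) = n + (g - s - 1) / 2 ∧
       max (0 : ℤ) ((s - 1) - s) - (-((g + s + 1) / 2)) = (g + s + 1) / 2 ∧
       (max (0 - n) ((s - 1) - s) + (n * s - n * (n - 1) / 2)) -
         (-((g + s + 1) / 2) - n + (n * (s + 1) - n * (n - 1) / 2)) = (g + s - 1) / 2)) ∧
    (Odd s →
      (max (0 : ℤ) (s - s) - (-((g - s) / 2)) = (g - s) / 2 ∧
       (max (0 - n) (s - s) + (n * s - n * (n - 1) / 2)) -
         (-((g - s) / 2) - n + (n * s - n * (n - 1) / 2)) = n + (g - s) / 2 ∧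
       max (0 : ℤ) (s - s) - (-((g + s) / 2)) = (g + s) / 2 ∧
       (max (0 - n) (s - s) + (n * s - n * (n - 1) / 2)) -
         (-((g + s) / 2) - n + (n * (s + 1) - n * (n - 1) / 2)) = (g + s) / 2)) := by
  obtain ⟨k, hk⟩ := hgodd
  have hmax0 : max (0 : ℤ) ((s - 1) - s) = 0 := by omega
  have hmaxn : max (0 - n) ((s - 1) - s) = -1 := by omega
  have hmax0' : max (0 : ℤ) (s - s) = 0 := by omega
  have hmaxn' : max (0 - n) (s - s) = 0 := by omega
  constructor
  · rintro ⟨m, hm⟩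
    rw [hmax0, hmaxn]
    have h1 : (g - s + 1) / 2 = k - m + 1 := by omega
    have h2 : (g + s + 1) / 2 = k + m + 1 := by omega
    have h3 : (g - s - 1) / 2 = k - m := by omega
    have h4 : (g + s - 1) / 2 = k + m := by omega
    rw [h1, h2, h3, h4]
    refine ⟨by ring, by ring, by ring, by ring⟩
  · rintro ⟨m, hm⟩
    rw [hmax0', hmaxn']
    have h1 : (g - s) / 2 = k - m := by omega
    have h2 : (g + s) / 2 = k + m + 1 := by omega
    rw [h1, h2]
    refine ⟨by ring, by ring, by ring, by ring⟩
end
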